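/- Let u_1,...,u_n be a circuit in ℝ^{n-1}, Δ = conv{u_i}, ∇ = −Δ. For x = Σ λ_i u_i with Σ λ_i = 0, the Minkowski functional of Δ ∩ ∇ satisfies μ_{Δ∩∇}(x) = n · max_i |λ_i|. -/

import Mathlib

/-!
Since `u` is a circuit, its linear relations are exactly the constant coefficient vectors, so the
representations of `x = ∑ lᵢ uᵢ` are `l + c • 1`. Convex weights `w` representing `r⁻¹ • x` give
the representation `r • w` of `x`, whose coefficient sum `r` forces `c = r / n`; hence
`r⁻¹ • x ∈ Δ` iff `-lᵢ ≤ r / n` for all `i`, and `r⁻¹ • x ∈ ∇` iff `lᵢ ≤ r / n` for all `i`.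
Together: `n * max |lᵢ| ≤ r`.
-/

open Set

lemma gauge_eq_of_forall_inv_smul_mem_iff {E : Type*} [AddCommGroup E] [Module ℝ E]
    {s : Set E} {x : E} {a : ℝ} (ha : 0 ≤ a) (h : ∀ r, 0 < r → (r⁻¹ • x ∈ s ↔ a ≤ r)) :
    gauge s x = a := by
  have hset : {r ∈ Ioi (0 : ℝ) | r⁻¹ • x ∈ s} = Ioi 0 ∩ Ici a := by
    ext r
    exact and_congr_right (h r)
  rw [gauge_def', hset]
  rcases ha.eq_or_lt with rfl | ha
  · rw [inter_eq_left.mpr Ioi_subset_Ici_self, csInf_Ioi]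
  · rw [inter_eq_right.mpr (Ici_subset_Ioi.mpr ha), csInf_Ici]

lemma convexHull_range_eq_image_stdSimplex {R ι E : Type*} [Field R] [LinearOrder R]
    [IsStrictOrderedRing R] [Fintype ι] [AddCommGroup E] [Module R E] (u : ι → E) :
    convexHull R (range u) = Fintype.linearCombination R u '' stdSimplex R ι := by
  classical
  rw [← convexHull_rangle_single_eq_stdSimplex, LinearMap.image_convexHull, ← range_comp]
  congr 2
  ext i
  simp [Fintype.linearCombination_apply_single]

lemma ker_linearCombination_eq_span_one {K ι E : Type*} [Field K] [Fintype ι]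
    [AddCommGroup E] [Module K E] [FiniteDimensional K E] {u : ι → E}
    (hspan : Submodule.span K (range u) = ⊤) (hsum : ∑ i, u i = 0)
    (hcard : Module.finrank K E + 1 = Fintype.card ι) :
    LinearMap.ker (Fintype.linearCombination K u) = K ∙ 1 := by
  have hone : (1 : ι → K) ≠ 0 := by
    have : Nonempty ι := Fintype.card_pos_iff.mp (by omega)
    exact one_ne_zero
  have hrank := LinearMap.finrank_range_add_finrank_ker (Fintype.linearCombination K u)
  rw [Fintype.range_linearCombination, hspan, finrank_top, Module.finrank_fintype_fun_eq_card]
    at hrank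
  refine (Submodule.eq_of_le_of_finrank_eq ?_ ?_).symm
  · rw [Submodule.span_singleton_le_iff_mem, LinearMap.mem_ker]
    simpa [Fintype.linearCombination_apply] using hsum
  · rw [finrank_span_singleton hone]
    omega

lemma inv_smul_sum_smul_mem_convexHull_iff {ι E : Type*} [Fintype ι] [Nonempty ι]
    [AddCommGroup E] [Module ℝ E] {u : ι → E}
    (hker : LinearMap.ker (Fintype.linearCombination ℝ u) = ℝ ∙ 1)
    {l : ι → ℝ} (hl : ∑ i, l i = 0) {r : ℝ} (hr : 0 < r) :
    r⁻¹ • ∑ i, l i • u i ∈ convexHull ℝ (range u) ↔ ∀ i, -l i ≤ r / Fintype.card ι := by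
  have hN : (0 : ℝ) < Fintype.card ι := by exact_mod_cast Fintype.card_pos
  have hone : Fintype.linearCombination ℝ u 1 = 0 := by
    rw [← LinearMap.mem_ker, hker]
    exact Submodule.mem_span_singleton_self 1
  rw [convexHull_range_eq_image_stdSimplex, ← Fintype.linearCombination_apply]
  constructor
  · rintro ⟨w, ⟨hw0, hw1⟩, hw⟩ i
    have hker_mem : r • w - l ∈ LinearMap.ker (Fintype.linearCombination ℝ u) := by
      rw [LinearMap.mem_ker, map_sub, map_smul, hw, smul_inv_smul₀ hr.ne', sub_self]
    obtain ⟨c, hc⟩ := Submodule.mem_span_singleton.mp (hker ▸ hker_mem)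
    have hc_sum : Fintype.card ι * c = r := by
      simpa [Finset.sum_sub_distrib, ← Finset.mul_sum, hw1, hl] using
        congrArg (fun f : ι → ℝ => ∑ j, f j) hc
    have hc_i : c = r * w i - l i := by simpa using congrFun hc i
    rw [← hc_sum, mul_div_cancel_left₀ _ hN.ne']
    linarith [mul_nonneg hr.le (hw0 i)]
  · intro h
    refine ⟨r⁻¹ • (l + (r / Fintype.card ι) • 1), ⟨fun i => ?_, ?_⟩, ?_⟩
    · have := h i
      simp only [Pi.smul_apply, Pi.add_apply, Pi.one_apply, smul_eq_mul, mul_one]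
      exact mul_nonneg (inv_nonneg.mpr hr.le) (by linarith)
    · simp only [Pi.smul_apply, Pi.add_apply, Pi.one_apply, smul_eq_mul, mul_one,
        ← Finset.mul_sum, Finset.sum_add_distrib, hl, Finset.sum_const, Finset.card_univ,
        nsmul_eq_mul, zero_add]
      field_simp
    · rw [map_smul, map_add, map_smul, hone, smul_zero, add_zero]

theorem gauge_inter_simplex_neg_eq (n : ℕ) (hn : 0 < n) (u : Fin n → (Fin (n-1) → ℝ))
    (hspan : Submodule.span ℝ (Set.range u) = ⊤)
    (hsum : ∑ i, u i = 0)
    (l : Fin n → ℝ) (hl : ∑ i, l i = 0) :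
    gauge (convexHull ℝ (Set.range u) ∩ -convexHull ℝ (Set.range u)) (∑ i, l i • u i)
      = n * (Finset.univ.sup'
          (Finset.univ_nonempty_iff.mpr (Fin.pos_iff_nonempty.mp hn))
          (fun i => |l i|)) := by
  have : Nonempty (Fin n) := Fin.pos_iff_nonempty.mp hn
  have hker := ker_linearCombination_eq_span_one hspan hsum (by simp; omega)
  have hM : 0 ≤ Finset.univ.sup' Finset.univ_nonempty (fun i => |l i|) :=
    (abs_nonneg _).trans (Finset.le_sup' (fun i => |l i|) (Finset.mem_univ ⟨0, hn⟩))
  refine gauge_eq_of_forall_inv_smul_mem_iff (by positivity) fun r hr => ?_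
  have hneg : -∑ i, l i • u i = ∑ i, (-l) i • u i := by simp [Finset.sum_neg_distrib]
  rw [mem_inter_iff, mem_neg, ← smul_neg, hneg,
    inv_smul_sum_smul_mem_convexHull_iff hker hl hr,
    inv_smul_sum_smul_mem_convexHull_iff hker (by simp [hl]) hr, Fintype.card_fin,
    ← le_div_iff₀' (by exact_mod_cast hn), Finset.sup'_le_iff]
  simp only [Finset.mem_univ, true_implies, abs_le', Pi.neg_apply, neg_neg, forall_and]
  exact and_comm
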